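/- Let (V, σ, W, F) be a mixed Hodge structure in linear-algebra form with Deligne bigrading (I^{p,q}), let p ∈ ℤ, and let v ∈ F^p ∩ W_{2p} satisfy σ(v) = v. Then v ∈ I^{p,p} (i.e., v is of type (p,p) with respect to the Deligne bigrading). -/

import Mathlib

/-- A conjugation on a complex vector space: an additive involution which is
semilinear with respect to complex conjugation. -/
def IsConjugation {V : Type*} [AddCommGroup V] [Module ℂ V] (σ : V → V) : Prop :=
  (∀ v w : V, σ (v + w) = σ v + σ w) ∧
  (∀ (c : ℂ) (v : V), σ (c • v) = (starRingEnd ℂ) c • σ v) ∧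
  (∀ v : V, σ (σ v) = v)

/-- A mixed Hodge structure in linear-algebra form on `(V, σ)`: an increasing,
exhaustive, σ-invariant weight filtration `W` and a decreasing, exhaustive Hodge
filtration `F` such that for all `k, p` one has
`Gr_k = F^p Gr_k ⊕ σ_k (F^{k-p+1} Gr_k)` (stated elementwise inside `V`:
the two pieces together with `W (k-1)` span `W k`, and they intersect only
in `W (k-1)`). -/
def IsMHS {V : Type*} [AddCommGroup V] [Module ℂ V]
    (σ : V → V) (W F : ℤ → Submodule ℂ V) : Prop :=
  IsConjugation σ ∧
  Monotone W ∧
  (∀ k : ℤ, ∀ v ∈ W k, σ v ∈ W k) ∧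
  (∃ a : ℤ, W a = ⊥) ∧ (∃ b : ℤ, W b = ⊤) ∧
  Antitone F ∧
  (∃ p : ℤ, F p = ⊤) ∧ (∃ q : ℤ, F q = ⊥) ∧
  (∀ k p : ℤ,
    (∀ v ∈ W k, ∃ x ∈ F p ⊓ W k, ∃ y ∈ F (k - p + 1) ⊓ W k, v - x - σ y ∈ W (k - 1)) ∧
    (∀ x ∈ F p ⊓ W k, ∀ y ∈ F (k - p + 1) ⊓ W k, x - σ y ∈ W (k - 1) → x ∈ W (k - 1)))

/-- A Deligne bigrading of the mixed Hodge structure `(V, σ, W, F)`: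
a family of subspaces `I^{p,q}` giving an internal direct sum decomposition of `V`
with `F^p = ⊕_{a ≥ p} I^{a,b}`, `W_k = ⊕_{a+b ≤ k} I^{a,b}`, and
`σ(I^{p,q}) ⊆ I^{q,p} + Σ_{r<q, s<p} I^{r,s}`. -/
def IsDeligneBigrading {V : Type*} [AddCommGroup V] [Module ℂ V]
    (σ : V → V) (W F : ℤ → Submodule ℂ V) (I : ℤ × ℤ → Submodule ℂ V) : Prop :=
  (⨆ pq : ℤ × ℤ, I pq) = ⊤ ∧
  (∀ pq : ℤ × ℤ, Disjoint (I pq) (⨆ pq' : ℤ × ℤ, ⨆ _ : pq' ≠ pq, I pq')) ∧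
  (∀ p : ℤ, F p = ⨆ ab : ℤ × ℤ, ⨆ _ : p ≤ ab.1, I ab) ∧
  (∀ k : ℤ, W k = ⨆ ab : ℤ × ℤ, ⨆ _ : ab.1 + ab.2 ≤ k, I ab) ∧
  (∀ p q : ℤ, ∀ v ∈ I (p, q),
    σ v ∈ I (q, p) ⊔ ⨆ rs : ℤ × ℤ, ⨆ _ : rs.1 < q ∧ rs.2 < p, I rs)

/-! Decompose `v` along the bigrading. `v ∈ F^p ∩ W_{2p}` confines its components to
`a ≥ p, a + b ≤ 2p`; since `σ(I^{a,b}) ⊆ I^{b,a} + Σ_{r<b, s<a} I^{r,s}` and `σ v = v`, they are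
also confined to `a ≤ p`, i.e. to `a = p, b ≤ p`. Applying `σ` once more leaves only `(p, p)`
and indices with `a < p`, which `v ∈ F^p` excludes. Each "confined to" is an intersection of
partial sums of the independent family `I`, computed in a modular, compactly generated lattice. -/

theorem iSupIndep.biSup_inf_biSup {α ι : Type*} [CompleteLattice α] [IsModularLattice α]
    [IsCompactlyGenerated α] {f : ι → α} (hf : iSupIndep f) (P Q : ι → Prop) :
    (⨆ i, ⨆ _ : P i, f i) ⊓ (⨆ i, ⨆ _ : Q i, f i) = ⨆ i, ⨆ _ : P i ∧ Q i, f i := by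
  refine le_antisymm ?_ (le_inf (biSup_mono fun _ => And.left) (biSup_mono fun _ => And.right))
  have hsplit : ⨆ i, ⨆ _ : P i, f i =
      (⨆ i, ⨆ _ : P i ∧ Q i, f i) ⊔ ⨆ i, ⨆ _ : P i ∧ ¬Q i, f i := by
    rw [← iSup_sup_eq]
    refine iSup_congr fun i => ?_
    by_cases hQ : Q i <;> simp [hQ]
  have hdisj : Disjoint (⨆ i, ⨆ _ : P i ∧ ¬Q i, f i) (⨆ i, ⨆ _ : Q i, f i) :=
    hf.disjoint_biSup_biSup (s := {i | P i ∧ ¬Q i}) (t := {i | Q i})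
      (Set.disjoint_left.mpr fun _ hi => hi.2)
  rw [hsplit, sup_inf_assoc_of_le _ (biSup_mono fun _ => And.right), hdisj.eq_bot, sup_bot_eq]

theorem iSupIndep.mem_biSup_of_mem_inf {R M ι : Type*} [Ring R] [AddCommGroup M] [Module R M]
    {N : ι → Submodule R M} (hN : iSupIndep N) {P Q S : ι → Prop}
    (hS : ∀ i, P i → Q i → S i) {v : M}
    (hv : v ∈ (⨆ i, ⨆ _ : P i, N i) ⊓ ⨆ i, ⨆ _ : Q i, N i) : v ∈ ⨆ i, ⨆ _ : S i, N i := by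
  rw [hN.biSup_inf_biSup] at hv
  exact biSup_mono (f := N) (fun i (hi : P i ∧ Q i) => hS i hi.1 hi.2) hv

def IsConjugation.toSemilinearMap {V : Type*} [AddCommGroup V] [Module ℂ V] {σ : V → V}
    (hσ : IsConjugation σ) : V →ₛₗ[starRingEnd ℂ] V where
  toFun := σ
  map_add' := hσ.1
  map_smul' := hσ.2.1

theorem IsDeligneBigrading.conj_mem_biSup {V : Type*} [AddCommGroup V] [Module ℂ V]
    {σ : V → V} {W F : ℤ → Submodule ℂ V} {I : ℤ × ℤ → Submodule ℂ V}
    (hI : IsDeligneBigrading σ W F I) (hσ : IsConjugation σ) {P Q : ℤ × ℤ → Prop}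
    (hPQ : ∀ a b, P (a, b) → Q (b, a) ∧ ∀ r s, r < b → s < a → Q (r, s)) {v : V}
    (hv : v ∈ ⨆ ab, ⨆ _ : P ab, I ab) : σ v ∈ ⨆ ab, ⨆ _ : Q ab, I ab := by
  suffices (⨆ ab, ⨆ _ : P ab, I ab).map hσ.toSemilinearMap ≤ ⨆ ab, ⨆ _ : Q ab, I ab from
    this (Submodule.mem_map_of_mem hv)
  simp only [Submodule.map_iSup, iSup_le_iff, Submodule.map_le_iff_le_comap]
  rintro ⟨a, b⟩ hab x hx
  obtain ⟨hQba, hQrs⟩ := hPQ a b hab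
  exact sup_le (le_biSup I hQba) (iSup₂_le fun rs hrs => le_biSup I (hQrs _ _ hrs.1 hrs.2))
    (hI.2.2.2.2 a b x hx)

theorem real_hodge_vector_of_type_pp_general {V : Type*} [AddCommGroup V] [Module ℂ V]
    (σ : V → V) (W F : ℤ → Submodule ℂ V) (h : IsMHS σ W F)
    (I : ℤ × ℤ → Submodule ℂ V) (hI : IsDeligneBigrading σ W F I)
    (p : ℤ) (v : V) (hvF : v ∈ F p) (hvW : v ∈ W (2 * p)) (hvσ : σ v = v) :
    v ∈ I (p, p) := by
  have hindep : iSupIndep I := hI.2.1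
  rw [hI.2.2.1] at hvF
  rw [hI.2.2.2.1] at hvW
  have h₀ : v ∈ ⨆ ab : ℤ × ℤ, ⨆ _ : p ≤ ab.1 ∧ ab.1 + ab.2 ≤ 2 * p, I ab :=
    hindep.mem_biSup_of_mem_inf (fun _ => And.intro) ⟨hvF, hvW⟩
  have h₁ : v ∈ ⨆ ab : ℤ × ℤ, ⨆ _ : ab.1 ≤ p, I ab :=
    hvσ ▸ hI.conj_mem_biSup h.1 (fun a b hab => ⟨by omega, fun r s hr _ => by omega⟩) h₀
  have h₂ : v ∈ ⨆ ab : ℤ × ℤ, ⨆ _ : ab.1 = p ∧ ab.2 ≤ p, I ab :=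
    hindep.mem_biSup_of_mem_inf (fun _ hFW ha => by omega) ⟨h₀, h₁⟩
  have h₃ : v ∈ ⨆ ab : ℤ × ℤ, ⨆ _ : ab.1 = p ∧ ab.2 = p ∨ ab.1 < p, I ab :=
    hvσ ▸ hI.conj_mem_biSup h.1 (fun a b hab => ⟨by omega, fun r s hr _ => by omega⟩) h₂
  have h₄ : v ∈ ⨆ ab : ℤ × ℤ, ⨆ _ : ab = (p, p), I ab :=
    hindep.mem_biSup_of_mem_inf (fun _ hab ha => Prod.ext (by omega) (by omega)) ⟨h₃, hvF⟩
  rwa [iSup_iSup_eq_left] at h₄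

/-- A real vector (`σ v = v`) lying in `F^p ∩ W_{2p}` is of type `(p,p)` with respect
to the Deligne bigrading. -/
theorem real_hodge_vector_of_type_pp {V : Type*} [AddCommGroup V] [Module ℂ V]
    [FiniteDimensional ℂ V]
    (σ : V → V) (W F : ℤ → Submodule ℂ V) (h : IsMHS σ W F)
    (I : ℤ × ℤ → Submodule ℂ V) (hI : IsDeligneBigrading σ W F I)
    (p : ℤ) (v : V) (hvF : v ∈ F p) (hvW : v ∈ W (2 * p)) (hvσ : σ v = v) :
    v ∈ I (p, p) :=
  real_hodge_vector_of_type_pp_general σ W F h I hI p v hvF hvW hvσ
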